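/- arXiv:1606.08492 — 3 statements merged into one kernel-verified Lean document; each statement's English description precedes it below -/
import Mathlib

section
/- Let k ⊆ K be fields, let V be a K-vector space, and let U be a k-subspace of V (viewing V as a k-vector space by restriction of scalars). Suppose there exists ℓ ≥ 1 such that the k-span (inside the ℓ-th exterior power of V over K, viewed as a k-vector space by restriction of scalars) of the set {u₁ ∧ ⋯ ∧ u_ℓ : u₁, …, u_ℓ ∈ U} is finite-dimensional over k and nonzero. Then U is finite-dimensional over k. -/
/-!
Pick `u₁, …, u_ℓ ∈ U` with `u₁ ∧ ⋯ ∧ u_ℓ ≠ 0`; they are linearly independent over `K`. For each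
slot `j`, substituting `x ∈ U` for `u_j` is a `k`-linear map `U → B`, and its kernel consists of the
`x` in the `K`-span of the `u_i` with `i ≠ j`. These spans have trivial intersection, so the `ℓ`
substitution maps together embed `U` into the finite-dimensional space `B^ℓ`.
-/

open ExteriorAlgebra Function

theorem ExteriorAlgebra.ιMulti_ne_zero_iff_linearIndependent {K E : Type*} [Field K]
    [AddCommGroup E] [Module K E] {n : ℕ} {v : Fin n → E} :
    ιMulti K n v ≠ 0 ↔ LinearIndependent K v := by
  refine ⟨fun h => by_contra fun hv => h ((ιMulti K n).map_linearDependent v hv), fun hv => ?_⟩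
  -- `ιMulti K n v` is the member of the independent family `ιMulti_family K n v` indexed by `Fin n`.
  have := (exteriorPower.ιMulti_family_linearIndependent_field (n := n) hv).ne_zero
    (Set.powersetCard.ofFinEmbEquiv (OrderIso.refl (Fin n)).toOrderEmbedding)
  rwa [Ne, ← Submodule.coe_eq_zero, exteriorPower.ιMulti_family_apply_coe, ιMulti_family,
    Equiv.symm_apply_apply] at this

theorem LinearIndependent.update_of_notMem_span {ι K E : Type*} [DivisionRing K]
    [AddCommGroup E] [Module K E] [DecidableEq ι] {v : ι → E} (hv : LinearIndependent K v)
    (j : ι) {x : E} (hx : x ∉ Submodule.span K (v '' {j}ᶜ)) :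
    LinearIndependent K (Function.update v j x) := by
  have hcompl : Set.EqOn (Function.update v j x) v {j}ᶜ := fun _ hi => update_of_ne hi _ _
  rw [← linearIndepOn_univ_iff, ← Set.union_compl_self {j}, ← Set.insert_eq,
    linearIndepOn_insert (s := {j}ᶜ) (by simp), hcompl.image_eq, update_self,
    linearIndepOn_congr hcompl]
  exact ⟨hv.linearIndepOn _, hx⟩

theorem LinearIndependent.eq_zero_of_forall_mem_span_image_compl {ι R M : Type*} [Ring R]
    [AddCommGroup M] [Module R M] [Nonempty ι] {v : ι → M} (hv : LinearIndependent R v)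
    {x : M} (hx : ∀ j, x ∈ Submodule.span R (v '' {j}ᶜ)) : x = 0 := by
  choose l hl hlx using fun j => Finsupp.mem_span_image_iff_linearCombination R |>.1 (hx j)
  obtain ⟨j₀⟩ := ‹Nonempty ι›
  have hl_const : ∀ j, l j = l j₀ := fun j => hv ((hlx j).trans (hlx j₀).symm)
  have hl₀ : l j₀ = 0 := Finsupp.ext fun j => by
    simpa [hl_const j] using Finsupp.notMem_support_iff.1 fun h => hl j h rfl
  rw [← hlx j₀, hl₀, map_zero]

theorem ExteriorAlgebra.mem_span_image_compl_of_ιMulti_update_eq_zero {K E : Type*} [Field K]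
    [AddCommGroup E] [Module K E] {n : ℕ} {v : Fin n → E} (hv : LinearIndependent K v)
    {j : Fin n} {x : E} (hx : ιMulti K n (Function.update v j x) = 0) :
    x ∈ Submodule.span K (v '' {j}ᶜ) :=
  by_contra fun hxv => ιMulti_ne_zero_iff_linearIndependent.2 (hv.update_of_notMem_span j hxv) hx

theorem Submodule.finiteDimensional_of_ιMulti_update_mem {k K V : Type*} [Field k] [Field K]
    [Algebra k K] [AddCommGroup V] [Module K V] [Module k V] [IsScalarTower k K V]
    (U : Submodule k V) (B : Submodule k (ExteriorAlgebra K V)) [FiniteDimensional k B]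
    {n : ℕ} [NeZero n] {v : Fin n → V} (hv : LinearIndependent K v)
    (hUB : ∀ x ∈ U, ∀ j, ιMulti K n (Function.update v j x) ∈ B) :
    FiniteDimensional k U := by
  let slot (j : Fin n) : U →ₗ[k] B :=
    (((ιMulti K n).toMultilinearMap.toLinearMap v j).restrictScalars k ∘ₗ U.subtype).codRestrict
      B fun x => hUB x x.2 j
  refine Module.Finite.of_injective (LinearMap.pi slot)
    ((injective_iff_map_eq_zero _).2 fun x hx => Subtype.ext ?_)
  refine hv.eq_zero_of_forall_mem_span_image_compl fun j =>
    mem_span_image_compl_of_ιMulti_update_eq_zero hv ?_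
  exact congr_arg Subtype.val (congr_fun hx j)

/-- **Hrushovski's exterior algebra lemma** (Lemma 1.5 / Lemma A.1 of
Freitag–Moosa): if `k ⊆ K` are fields, `V` a `K`-vector space, `U` a
`k`-subspace of `V`, and for some `ℓ ≥ 1` the `k`-span of the set of
`ℓ`-fold wedge products of elements of `U` (taken in the exterior algebra
of `V` over `K`) is a nonzero finite-dimensional `k`-vector space, then
`U` is finite-dimensional over `k`. -/
theorem span_wedge_finiteDimensional_of_finiteDimensional
    {k K V : Type*} [Field k] [Field K] [Algebra k K]
    [AddCommGroup V] [Module K V] [Module k V] [IsScalarTower k K V]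
    (U : Submodule k V) (ℓ : ℕ) (hℓ : 1 ≤ ℓ)
    (B : Submodule k (ExteriorAlgebra K V))
    (hB : B = Submodule.span k
      {x : ExteriorAlgebra K V | ∃ u : Fin ℓ → V, (∀ i, u i ∈ U) ∧
        x = (List.ofFn fun i => ExteriorAlgebra.ι K (u i)).prod})
    (hfin : FiniteDimensional k B) (hne : B ≠ ⊥) :
    FiniteDimensional k U := by
  have hwedge_mem {u : Fin ℓ → V} (hu : ∀ i, u i ∈ U) : ιMulti K ℓ u ∈ B :=
    hB ▸ Submodule.subset_span ⟨u, hu, ιMulti_apply (R := K) u⟩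
  obtain ⟨u, hu, hu0⟩ : ∃ u : Fin ℓ → V, (∀ i, u i ∈ U) ∧ ιMulti K ℓ u ≠ 0 := by
    by_contra! h
    refine hne (hB ▸ Submodule.span_eq_bot.2 ?_)
    rintro _ ⟨u, hu, rfl⟩
    exact (ιMulti_apply (R := K) u).symm ▸ h u hu
  have : NeZero ℓ := ⟨by omega⟩
  exact U.finiteDimensional_of_ιMulti_update_mem B
    (ιMulti_ne_zero_iff_linearIndependent.1 hu0) fun x hx j =>
      hwedge_mem <| (forall_update_iff u fun _ y => y ∈ U).2 ⟨hx, fun i _ => hu i⟩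
end

section
/- Let k ⊆ K be fields, let V be a K-vector space, and let U be a k-subspace of V (viewing V as a k-vector space by restriction of scalars). Fix ℓ ≥ 1, and suppose the k-span (inside the ℓ-th exterior power of V over K) of {w₁ ∧ ⋯ ∧ w_ℓ : w₁, …, w_ℓ ∈ U} is finite-dimensional over k. If u₁, …, u_ℓ ∈ U satisfy u₁ ∧ ⋯ ∧ u_ℓ ≠ 0, then the k-vector space U ∩ span_K{u₁, …, u_{ℓ−1}} is finite-dimensional over k. -/
/-- The key claim in the proof of Hrushovski's exterior algebra lemma
(Lemma A.1 of Freitag–Moosa): with `k ⊆ K` fields, `V` a `K`-vector space,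
`U` a `k`-subspace of `V`, and `ℓ ≥ 1` such that the `k`-span of the
`ℓ`-fold wedge products of elements of `U` is finite-dimensional over `k`,
if `u₁, …, u_ℓ ∈ U` satisfy `u₁ ∧ ⋯ ∧ u_ℓ ≠ 0` then
`U ∩ span_K {u₁, …, u_{ℓ-1}}` is finite-dimensional over `k`. -/
theorem inf_span_finiteDimensional
    {k K V : Type*} [Field k] [Field K] [Algebra k K]
    [AddCommGroup V] [Module K V] [Module k V] [IsScalarTower k K V]
    (U : Submodule k V) (ℓ : ℕ) (hℓ : 1 ≤ ℓ)
    (hfin : FiniteDimensional k (Submodule.span k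
      {x : ExteriorAlgebra K V | ∃ w : Fin ℓ → V, (∀ i, w i ∈ U) ∧
        x = (List.ofFn fun i => ExteriorAlgebra.ι K (w i)).prod}))
    (u : Fin ℓ → V) (hu : ∀ i, u i ∈ U)
    (hne : (List.ofFn fun i => ExteriorAlgebra.ι K (u i)).prod ≠ 0) :
    FiniteDimensional k
      ↥(U ⊓ (Submodule.span K (u '' {i : Fin ℓ | (i : ℕ) < ℓ - 1})).restrictScalars k) := by
  classical
  set W : Submodule k (ExteriorAlgebra K V) := Submodule.span k
      {x : ExteriorAlgebra K V | ∃ w : Fin ℓ → V, (∀ i, w i ∈ U) ∧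
        x = (List.ofFn fun i => ExteriorAlgebra.ι K (w i)).prod} with hW
  have hne' : ExteriorAlgebra.ιMulti K ℓ u ≠ 0 := by
    rwa [ExteriorAlgebra.ιMulti_apply]
  -- the linear maps φ j : x ↦ u₀ ∧ ⋯ ∧ x ∧ ⋯ ∧ u_{ℓ-1} (x in slot j)
  let φ : Fin ℓ → (V →ₗ[K] ExteriorAlgebra K V) := fun j =>
    (ExteriorAlgebra.ιMulti K ℓ).toMultilinearMap.toLinearMap u j
  have hφ : ∀ j x, φ j x = ExteriorAlgebra.ιMulti K ℓ (Function.update u j x) :=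
    fun j x => rfl
  have hmem : ∀ (j : Fin ℓ) (x : V), x ∈ U → φ j x ∈ W := by
    intro j x hx
    refine Submodule.subset_span ⟨Function.update u j x, ?_, ?_⟩
    · intro i
      rcases eq_or_ne i j with rfl | h
      · simpa using hx
      · simpa [Function.update_of_ne h] using hu i
    · rw [hφ, ExteriorAlgebra.ιMulti_apply]
  -- key computation
  have hφu : ∀ j i : Fin ℓ, i ≠ j → φ j (u i) = 0 := by
    intro j i hij
    rw [hφ]
    refine AlternatingMap.map_eq_zero_of_eq _ _ (i := i) (j := j) ?_ hij
    rw [Function.update_of_ne hij, Function.update_self]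
  have key : ∀ x ∈ Submodule.span K (u '' {i : Fin ℓ | (i : ℕ) < ℓ - 1}),
      (∀ j, φ j x = 0) → x = 0 := by
    intro x hx h0
    rcases (Finsupp.mem_span_image_iff_linearCombination K).1 hx with ⟨l, hl, rfl⟩
    have hl0 : l = 0 := by
      ext j
      have : φ j (Finsupp.linearCombination K u l) = l j • ExteriorAlgebra.ιMulti K ℓ u := by
        rw [Finsupp.linearCombination_apply, map_finsuppSum]
        rw [Finsupp.sum_eq_single j]
        · rw [map_smul, hφ, Function.update_eq_self]
        · intro i _ hij
          rw [map_smul, hφu j i hij, smul_zero]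
        · intro _; rw [zero_smul, map_zero]
      rw [h0 j] at this
      have := (smul_eq_zero.1 this.symm).resolve_right hne'
      simpa using this
    rw [hl0, map_zero]
  -- the embedding
  set S := U ⊓ (Submodule.span K (u '' {i : Fin ℓ | (i : ℕ) < ℓ - 1})).restrictScalars k with hS
  let F : ↥S →ₗ[k] (Fin ℓ → W) :=
    { toFun := fun x j => ⟨φ j x.1, hmem j x.1 x.2.1⟩
      map_add' := by
        intro x y
        ext j
        simp [map_add]
      map_smul' := by
        intro c x
        ext j
        simp [LinearMap.map_smul_of_tower] }
  have hinj : Function.Injective F := by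
    intro x y hxy
    have hsub : (x - y : ↥S).1 ∈ S := (x - y).2
    have h0 : ∀ j, φ j ((x : V) - (y : V)) = 0 := by
      intro j
      have h : φ j (x : V) = φ j (y : V) := congrArg Subtype.val (congrFun hxy j)
      rw [map_sub, h, sub_self]
    have := key _ hsub.2 h0
    exact Subtype.ext (sub_eq_zero.1 this)
  exact FiniteDimensional.of_injective F hinj
end

section
/- Let (K, δ) be a differential field of characteristic zero with field of constants C = {x ∈ K : δx = 0}, and let F be an intermediate field with C ⊆ F ⊆ K such that F has finite transcendence degree over C. Let Γ := {γ ∈ C : there exists a nonzero x ∈ F with δx = γ·x}, an additive subgroup of C. Then Γ has finite rank; more precisely, for every natural number n strictly greater than the transcendence degree of F over C, any n elements γ₁, …, γₙ of Γ are ℤ-linearly dependent, i.e., there exist integers e₁, …, eₙ, not all zero, with e₁γ₁ + ⋯ + eₙγₙ = 0 in K. -/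
/-!
Choose nonzero `xᵢ ∈ F` with `δ xᵢ = γᵢ xᵢ`. Since `n` exceeds `trdeg(F/C)`, the `xᵢ` are
algebraically dependent over `C`, i.e. the monomials `x^d` are `C`-linearly dependent. But `δ` is
`C`-linear and `x^d` is an eigenvector of `δ` with eigenvalue `∑ dᵢ γᵢ`. Eigenvectors for distinct
eigenvalues are linearly independent, so two exponents `d₀ ≠ d₁` share an eigenvalue, and
`e = d₁ - d₀` is the required relation.
-/

/-- The field of constants `C = {x ∈ K : δ x = 0}` of a field `K` equipped
with a derivation `δ` (an additive map satisfying the Leibniz rule). -/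
def constantSubfield {K : Type*} [Field K] (δ : K → K)
    (hadd : ∀ x y, δ (x + y) = δ x + δ y)
    (hmul : ∀ x y, δ (x * y) = δ x * y + x * δ y) : Subfield K where
  carrier := {x | δ x = 0}
  zero_mem' := by
    have h : δ 0 + δ 0 = δ 0 + 0 := by rw [← hadd]; simp
    exact add_left_cancel h
  one_mem' := by
    have h : δ 1 + δ 1 = δ 1 + 0 := by
      have := hmul 1 1
      simp only [mul_one, one_mul] at this
      rw [← this]; simp
    exact add_left_cancel h
  add_mem' := by
    intro a b ha hb
    simp only [Set.mem_setOf_eq] at *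
    rw [hadd, ha, hb, add_zero]
  neg_mem' := by
    intro a ha
    simp only [Set.mem_setOf_eq] at *
    have h0 : δ 0 + δ 0 = δ 0 + 0 := by rw [← hadd]; simp
    have h0' : δ 0 = 0 := add_left_cancel h0
    have h := hadd a (-a)
    rw [add_neg_cancel, h0', ha, zero_add] at h
    exact h.symm
  mul_mem' := by
    intro a b ha hb
    simp only [Set.mem_setOf_eq] at *
    rw [hmul, ha, hb, zero_mul, mul_zero, add_zero]
  inv_mem' := by
    intro a ha
    simp only [Set.mem_setOf_eq] at *
    rcases eq_or_ne a 0 with rfl | ha0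
    · simpa using ha
    · have h1 : δ 1 + δ 1 = δ 1 + 0 := by
        have := hmul 1 1
        simp only [mul_one, one_mul] at this
        rw [← this]; simp
      have h1' : δ 1 = 0 := add_left_cancel h1
      have h := hmul a a⁻¹
      rw [mul_inv_cancel₀ ha0, h1', ha, zero_mul, zero_add] at h
      exact (mul_eq_zero.mp h.symm).resolve_left ha0

/-- The transcendence degree of `F` over `C`, for subfields `C ⊆ F` of a
field `K`: the supremum of the cardinalities of subsets of `F` that are
algebraically independent over `C`. -/
noncomputable def subfieldTrdeg {K : Type*} [Field K] (C F : Subfield K) : Cardinal :=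
  ⨆ s : {s : Set K // s ⊆ (F : Set K) ∧ AlgebraicIndependent C ((↑) : s → K)},
    Cardinal.mk s
open Finsupp

section

variable {R A : Type*} [CommRing R] [CommRing A] [Algebra R A] (D : Derivation R A A)

theorem Derivation.map_mul_of_eq_smul {a b : A} {α β : R} (ha : D a = α • a)
    (hb : D b = β • b) : D (a * b) = (α + β) • (a * b) := by
  rw [D.leibniz, ha, hb]
  simp only [smul_eq_mul, Algebra.smul_def, map_add]
  ring

theorem Derivation.map_pow_of_eq_smul {a : A} {α : R} (ha : D a = α • a) (k : ℕ) :
    D (a ^ k) = (k • α) • a ^ k := by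
  induction k with
  | zero => simp
  | succ k ih => rw [pow_succ, D.map_mul_of_eq_smul ih ha, succ_nsmul]

theorem Derivation.map_prod_pow_of_eq_smul {ι : Type*} {x : ι → A} {γ : ι → R}
    (hx : ∀ i, D (x i) = γ i • x i) (d : ι →₀ ℕ) :
    D (d.prod fun i k => x i ^ k) = weight γ d • d.prod fun i k => x i ^ k := by
  induction d using Finsupp.induction with
  | zero => simp
  | single_add i k d _ _ ih =>
    rw [prod_add_index' (fun _ => pow_zero _) (fun _ _ _ => pow_add _ _ _),
      prod_single_index (h := fun i k => x i ^ k) (pow_zero _), map_add, weight_single,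
      D.map_mul_of_eq_smul (D.map_pow_of_eq_smul (hx i) k) ih]

theorem AlgebraicIndependent.of_linearIndependent_prod_pow {ι : Type*} {x : ι → A}
    (h : LinearIndependent R fun d : ι →₀ ℕ => d.prod fun i k => x i ^ k) :
    AlgebraicIndependent R x := by
  have hcomb : linearCombination R (fun d : ι →₀ ℕ => d.prod fun i k => x i ^ k) =
      (MvPolynomial.aeval x).toLinearMap ∘ₗ
        (MvPolynomial.basisMonomials ι R).repr.symm.toLinearMap := by
    ext d
    simp [MvPolynomial.aeval_monomial]
  rw [linearIndependent_iff_injective_finsuppLinearCombination, hcomb, LinearMap.coe_comp] at h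
  exact algebraicIndependent_iff_injective_aeval.2
    ((Function.Injective.of_comp_iff' _ (LinearEquiv.bijective _)).1 h)

end

theorem Derivation.algebraicIndependent_of_injective_weight {C K ι : Type*} [Field C] [Field K]
    [Algebra C K] (D : Derivation C K K) {x : ι → K} {γ : ι → C} (hx0 : ∀ i, x i ≠ 0)
    (hx : ∀ i, D (x i) = γ i • x i) (hγ : Function.Injective (weight γ : (ι →₀ ℕ) → C)) :
    AlgebraicIndependent C x :=
  .of_linearIndependent_prod_pow <|
    Module.End.eigenvectors_linearIndependent' (D : Module.End C K) _ hγ _ fun d =>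
      ⟨Module.End.mem_eigenspace_iff.2 (D.map_prod_pow_of_eq_smul hx d),
        prod_ne_zero_iff.2 fun i _ => pow_ne_zero _ (hx0 i)⟩

theorem exists_ne_zero_sum_zsmul_eq_zero_of_weight_eq {ι M : Type*} [Fintype ι] [AddCommGroup M]
    {γ : ι → M} {d₀ d₁ : ι →₀ ℕ} (hne : d₀ ≠ d₁) (heq : weight γ d₀ = weight γ d₁) :
    ∃ e : ι → ℤ, e ≠ 0 ∧ ∑ i, e i • γ i = 0 := by
  refine ⟨fun i => d₁ i - d₀ i, fun he => hne (Finsupp.ext fun i => ?_), ?_⟩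
  · have h := congrFun he i
    simp only [Pi.zero_apply, sub_eq_zero, Nat.cast_inj] at h
    exact h.symm
  · simp_rw [sub_smul, Finset.sum_sub_distrib, natCast_zsmul, ← weight_eq_sum, heq, sub_self]

theorem AlgebraicIndependent.cardinalMk_le_subfieldTrdeg {K : Type*} [Field K] {C F : Subfield K}
    {s : Set K} (hs : AlgebraicIndependent C ((↑) : s → K)) (hsF : s ⊆ F) :
    Cardinal.mk s ≤ subfieldTrdeg C F :=
  le_ciSup (f := fun t : {t : Set K // t ⊆ (F : Set K) ∧ AlgebraicIndependent C ((↑) : t → K)} =>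
    Cardinal.mk t) Cardinal.bddAbove_of_small ⟨s, hsF, hs⟩

theorem not_algebraicIndependent_of_subfieldTrdeg_lt {K : Type*} [Field K] {C F : Subfield K}
    {n : ℕ} (hn : subfieldTrdeg C F < n) {x : Fin n → K} (hxF : ∀ i, x i ∈ F) :
    ¬ AlgebraicIndependent C x := fun hx => by
  have hle := hx.to_subtype_range.cardinalMk_le_subfieldTrdeg (Set.range_subset_iff.2 hxF)
  have hcard : Cardinal.mk (Set.range x) = n := by
    simpa using Cardinal.mk_range_eq_of_injective hx.injective
  exact (hcard ▸ hle).not_gt hn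

def constantSubfield.derivation {K : Type*} [Field K] (δ : K → K)
    (hadd : ∀ x y, δ (x + y) = δ x + δ y)
    (hmul : ∀ x y, δ (x * y) = δ x * y + x * δ y) :
    Derivation (constantSubfield δ hadd hmul) K K :=
  Derivation.mk'
    { toFun := δ
      map_add' := hadd
      map_smul' := fun c a => by
        rw [Subfield.smul_def, smul_eq_mul, hmul, c.2, zero_mul, zero_add]
        rfl }
    fun a b => by
      rw [LinearMap.coe_mk, AddHom.coe_mk, hmul, smul_eq_mul, smul_eq_mul]
      ring

theorem kolchin_multiplicative_ostrowski_general {K : Type*} [Field K]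
    (δ : K → K)
    (hadd : ∀ x y, δ (x + y) = δ x + δ y)
    (hmul : ∀ x y, δ (x * y) = δ x * y + x * δ y)
    (F : Subfield K)
    (n : ℕ) (hn : subfieldTrdeg (constantSubfield δ hadd hmul) F < n)
    (γ : Fin n → K)
    (hγconst : ∀ i, δ (γ i) = 0)
    (hγsol : ∀ i, ∃ x : K, x ∈ F ∧ x ≠ 0 ∧ δ x = γ i * x) :
    ∃ e : Fin n → ℤ, e ≠ 0 ∧ ∑ i, (e i : K) * γ i = 0 := by
  choose x hxF hx0 hxδ using hγsol
  let γC : Fin n → constantSubfield δ hadd hmul := fun i => ⟨γ i, hγconst i⟩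
  have hweight : ¬ Function.Injective (weight γC : (Fin n →₀ ℕ) → _) := fun hinj =>
    not_algebraicIndependent_of_subfieldTrdeg_lt hn hxF <|
      (constantSubfield.derivation δ hadd hmul).algebraicIndependent_of_injective_weight
        (γ := γC) hx0 hxδ hinj
  obtain ⟨d₀, d₁, heq, hne⟩ := Function.not_injective_iff.1 hweight
  obtain ⟨e, he, hsum⟩ := exists_ne_zero_sum_zsmul_eq_zero_of_weight_eq hne heq
  refine ⟨e, he, ?_⟩
  simpa [zsmul_eq_mul] using congrArg Subtype.val hsum

/-- **Kolchin's lemma** (Fact 4.4 of Freitag–Moosa): let `(K, δ)` be a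
differential field of characteristic zero with field of constants `C`,
and let `F` be an intermediate field, `C ⊆ F ⊆ K`, of finite transcendence
degree over `C`.  Then for every natural number `n` strictly greater than
`trdeg(F/C)`, any `n` elements `γ₁, …, γₙ` of
`Γ = {γ ∈ C : δ x = γ x has a nonzero solution in F}` are `ℤ`-linearly
dependent; in particular `Γ` is an additive group of finite rank. -/
theorem kolchin_multiplicative_ostrowski {K : Type*} [Field K] [CharZero K]
    (δ : K → K)
    (hadd : ∀ x y, δ (x + y) = δ x + δ y)
    (hmul : ∀ x y, δ (x * y) = δ x * y + x * δ y)
    (F : Subfield K)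
    (hCF : constantSubfield δ hadd hmul ≤ F)
    (hfin : subfieldTrdeg (constantSubfield δ hadd hmul) F < Cardinal.aleph0)
    (n : ℕ) (hn : subfieldTrdeg (constantSubfield δ hadd hmul) F < n)
    (γ : Fin n → K)
    (hγconst : ∀ i, δ (γ i) = 0)
    (hγsol : ∀ i, ∃ x : K, x ∈ F ∧ x ≠ 0 ∧ δ x = γ i * x) :
    ∃ e : Fin n → ℤ, e ≠ 0 ∧ ∑ i, (e i : K) * γ i = 0 :=
  kolchin_multiplicative_ostrowski_general δ hadd hmul F n hn γ hγconst hγsol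
end
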